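/- arXiv:2404.18724 — 3 statements merged into one kernel-verified Lean document; each statement's English description precedes it below -/
import Mathlib

section
/- Let v minimize Q(v) = ⟨g, v⟩ + (1/2)⟨J v, v⟩ + (L/6)‖v‖³_H over ℝᵖ, where H is symmetric positive definite, J symmetric, L > 0, and ‖v‖_H = ⟨Hv,v⟩^{1/2}. Then J + (L/2)‖v‖_H · H is positive semidefinite. -/
open Matrix

/-!
At a global minimizer `v` of `Q(u) = ⟨g, u⟩ + ½⟨Ju, u⟩ + (L/6)‖u‖_H³`, with `r = ‖v‖_H` and
`A = J + (L/2) r H`, the first-order condition reads `g = -A v`, and it turns the excess of `Q`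
into the exact identity
  `Q(v + w) - Q(v) = ½⟨A w, w⟩ + (L/12) (s - r)² (2s + r)`,   `s = ‖v + w‖_H`.
If `⟨Hv, h⟩ ≠ 0`, a suitable multiple `w = t h` keeps `v + w` on the sphere `s = r`, so the
cubic term vanishes and `⟨A h, h⟩ ≥ 0`. If `⟨Hv, h⟩ = 0`, then along `w = t h` the cubic term is
at most `(L/6) ⟨Hh, h⟩ (s - r) t² = o(t²)`, and letting `t → 0` again gives `⟨A h, h⟩ ≥ 0`.
-/

open Filter Topology

namespace Matrix

variable {n R : Type*} [Fintype n] [CommRing R]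

theorem IsSymm.mulVec_dotProduct_comm {A : Matrix n n R} (hA : A.IsSymm) (x y : n → R) :
    A *ᵥ x ⬝ᵥ y = A *ᵥ y ⬝ᵥ x := by
  rw [dotProduct_comm, dotProduct_mulVec, ← mulVec_transpose, hA.eq]

theorem IsSymm.mulVec_add_dotProduct_add {A : Matrix n n R} (hA : A.IsSymm) (x y : n → R) :
    A *ᵥ (x + y) ⬝ᵥ (x + y) = A *ᵥ x ⬝ᵥ x + 2 * (A *ᵥ x ⬝ᵥ y) + A *ᵥ y ⬝ᵥ y := by
  rw [mulVec_add, add_dotProduct, dotProduct_add, dotProduct_add, hA.mulVec_dotProduct_comm y x]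
  ring

theorem mulVec_smul_dotProduct_smul (A : Matrix n n R) (c : R) (x : n → R) :
    A *ᵥ (c • x) ⬝ᵥ (c • x) = c ^ 2 * (A *ᵥ x ⬝ᵥ x) := by
  rw [mulVec_smul, smul_dotProduct, dotProduct_smul, smul_eq_mul, smul_eq_mul]
  ring

theorem IsSymm.mulVec_add_smul_dotProduct_add_smul {A : Matrix n n R} (hA : A.IsSymm)
    (x y : n → R) (t : R) :
    A *ᵥ (x + t • y) ⬝ᵥ (x + t • y) =
      A *ᵥ x ⬝ᵥ x + 2 * t * (A *ᵥ x ⬝ᵥ y) + t ^ 2 * (A *ᵥ y ⬝ᵥ y) := by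
  rw [hA.mulVec_add_dotProduct_add, mulVec_smul_dotProduct_smul, dotProduct_smul, smul_eq_mul]
  ring

omit [Fintype n] in
theorem PosSemidef.isSymm {A : Matrix n n ℝ} (hA : A.PosSemidef) : A.IsSymm :=
  isHermitian_iff_isSymm.mp hA.isHermitian

theorem PosSemidef.mulVec_dotProduct_self_nonneg {A : Matrix n n ℝ} (hA : A.PosSemidef)
    (x : n → ℝ) : 0 ≤ A *ᵥ x ⬝ᵥ x := by
  simpa [dotProduct_comm] using hA.dotProduct_mulVec_nonneg x

theorem PosDef.mulVec_dotProduct_self_pos {A : Matrix n n ℝ} (hA : A.PosDef) {x : n → ℝ}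
    (hx : x ≠ 0) : 0 < A *ᵥ x ⬝ᵥ x := by
  simpa [dotProduct_comm] using hA.dotProduct_mulVec_pos hx

theorem posSemidef_of_isSymm_of_mulVec_dotProduct_self_nonneg {A : Matrix n n ℝ}
    (hA : A.IsSymm) (h : ∀ x, 0 ≤ A *ᵥ x ⬝ᵥ x) : A.PosSemidef :=
  PosSemidef.of_dotProduct_mulVec_nonneg (isHermitian_iff_isSymm.mpr hA)
    fun x => by simpa [dotProduct_comm] using h x

end Matrix

theorem HasDerivAt.sqrt_pow_three {f : ℝ → ℝ} {f' x : ℝ} (hf : HasDerivAt f f' x)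
    (hnonneg : ∀ᶠ y in 𝓝 x, 0 ≤ f y) :
    HasDerivAt (fun y => √(f y) ^ 3) (3 / 2 * √(f x) * f') x := by
  have hrpow : (fun y => f y ^ (3 / 2 : ℝ)) =ᶠ[𝓝 x] fun y => √(f y) ^ 3 :=
    hnonneg.mono fun y hy => by
      dsimp only
      rw [Real.sqrt_eq_rpow, ← Real.rpow_natCast, ← Real.rpow_mul hy]
      norm_num
  refine (hf.rpow_const (p := 3 / 2) (Or.inr (by norm_num))).congr_of_eventuallyEq
    hrpow.symm |>.congr_deriv ?_
  rw [Real.sqrt_eq_rpow]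
  norm_num
  ring

section CubicModel

variable {n : Type*} [Fintype n] {g v : n → ℝ} {J H : Matrix n n ℝ} {L : ℝ}

noncomputable def cubicModel (g : n → ℝ) (J H : Matrix n n ℝ) (L : ℝ) (u : n → ℝ) : ℝ :=
  g ⬝ᵥ u + 1 / 2 * (J *ᵥ u ⬝ᵥ u) + L / 6 * √(H *ᵥ u ⬝ᵥ u) ^ 3

noncomputable def shiftedHessian (J H : Matrix n n ℝ) (L : ℝ) (v : n → ℝ) : Matrix n n ℝ :=
  J + (L / 2 * √(H *ᵥ v ⬝ᵥ v)) • H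

theorem cubicModel_add_smul (hJ : J.IsSymm) (hH : H.IsSymm) (v h : n → ℝ) (t : ℝ) :
    cubicModel g J H L (v + t • h) =
      g ⬝ᵥ v + t * (g ⬝ᵥ h)
        + 1 / 2 * (J *ᵥ v ⬝ᵥ v + 2 * t * (J *ᵥ v ⬝ᵥ h) + t ^ 2 * (J *ᵥ h ⬝ᵥ h))
        + L / 6 * √(H *ᵥ v ⬝ᵥ v + 2 * t * (H *ᵥ v ⬝ᵥ h) + t ^ 2 * (H *ᵥ h ⬝ᵥ h)) ^ 3 := by
  rw [cubicModel, hJ.mulVec_add_smul_dotProduct_add_smul, hH.mulVec_add_smul_dotProduct_add_smul,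
    dotProduct_add, dotProduct_smul, smul_eq_mul]

theorem add_shiftedHessian_mulVec_eq_zero (hJ : J.IsSymm) (hH : H.PosSemidef)
    (hmin : ∀ u, cubicModel g J H L v ≤ cubicModel g J H L u) :
    g + shiftedHessian J H L v *ᵥ v = 0 := by
  suffices horth : ∀ h, (g + shiftedHessian J H L v *ᵥ v) ⬝ᵥ h = 0 from
    dotProduct_self_eq_zero.mp (horth _)
  intro h
  have hlocal : IsLocalMin (fun t : ℝ => cubicModel g J H L (v + t • h)) 0 :=
    Eventually.of_forall fun t => by simpa using hmin (v + t • h)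
  have hquad (a b c : ℝ) : HasDerivAt (fun t : ℝ => a + 2 * t * b + t ^ 2 * c) (2 * b) 0 := by
    refine ((((hasDerivAt_id (0 : ℝ)).const_mul 2).mul_const b).const_add a).add
      ((hasDerivAt_pow 2 (0 : ℝ)).mul_const c) |>.congr_deriv ?_
    simp
  have hcubic := (hquad _ (H *ᵥ v ⬝ᵥ h) (H *ᵥ h ⬝ᵥ h)).sqrt_pow_three
    (Eventually.of_forall fun t => by
      rw [← hH.isSymm.mulVec_add_smul_dotProduct_add_smul]
      exact hH.mulVec_dotProduct_self_nonneg (v + t • h))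
  have hderiv : HasDerivAt (fun t : ℝ => cubicModel g J H L (v + t • h))
      (g ⬝ᵥ h + J *ᵥ v ⬝ᵥ h + L / 2 * √(H *ᵥ v ⬝ᵥ v) * (H *ᵥ v ⬝ᵥ h)) 0 := by
    simp only [cubicModel_add_smul hJ hH.isSymm]
    refine ((((hasDerivAt_id (0 : ℝ)).mul_const _).const_add _).add
      ((hquad _ _ _).const_mul (1 / 2))).add (hcubic.const_mul (L / 6)) |>.congr_deriv ?_
    simp only [mul_zero, zero_mul, add_zero, zero_pow two_ne_zero]
    ring
  rw [← hlocal.hasDerivAt_eq_zero hderiv, shiftedHessian]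
  simp only [add_dotProduct, add_mulVec, smul_mulVec, smul_dotProduct, smul_eq_mul]
  ring

theorem cubicModel_add_sub_cubicModel (hJ : J.IsSymm) (hH : H.PosSemidef)
    (hgrad : g + shiftedHessian J H L v *ᵥ v = 0) (w : n → ℝ) :
    cubicModel g J H L (v + w) - cubicModel g J H L v =
      1 / 2 * (shiftedHessian J H L v *ᵥ w ⬝ᵥ w) +
        L / 12 * (√(H *ᵥ (v + w) ⬝ᵥ (v + w)) - √(H *ᵥ v ⬝ᵥ v)) ^ 2 *
          (2 * √(H *ᵥ (v + w) ⬝ᵥ (v + w)) + √(H *ᵥ v ⬝ᵥ v)) := by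
  unfold cubicModel shiftedHessian at *
  set r := √(H *ᵥ v ⬝ᵥ v)
  set s := √(H *ᵥ (v + w) ⬝ᵥ (v + w))
  have hr2 : r ^ 2 = H *ᵥ v ⬝ᵥ v := Real.sq_sqrt (hH.mulVec_dotProduct_self_nonneg v)
  have hs2 : s ^ 2 = H *ᵥ v ⬝ᵥ v + 2 * (H *ᵥ v ⬝ᵥ w) + H *ᵥ w ⬝ᵥ w := by
    rw [Real.sq_sqrt (hH.mulVec_dotProduct_self_nonneg _), hH.isSymm.mulVec_add_dotProduct_add]
  have hgw : g ⬝ᵥ w + (J *ᵥ v ⬝ᵥ w + L / 2 * r * (H *ᵥ v ⬝ᵥ w)) = 0 := by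
    simpa only [add_dotProduct, add_mulVec, smul_mulVec, smul_dotProduct, smul_eq_mul,
      zero_dotProduct] using congrArg (· ⬝ᵥ w) hgrad
  rw [hJ.mulVec_add_dotProduct_add, dotProduct_add, add_mulVec, smul_mulVec, add_dotProduct,
    smul_dotProduct, smul_eq_mul]
  linear_combination hgw + (L / 4 * r) * hs2 - (L / 4 * r) * hr2

theorem shiftedHessian_nonneg_of_dotProduct_ne_zero (hJ : J.IsSymm) (hH : H.PosDef)
    (hmin : ∀ u, cubicModel g J H L v ≤ cubicModel g J H L u)
    (hgrad : g + shiftedHessian J H L v *ᵥ v = 0) {h : n → ℝ} (hvh : H *ᵥ v ⬝ᵥ h ≠ 0) :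
    0 ≤ shiftedHessian J H L v *ᵥ h ⬝ᵥ h := by
  have hh : h ≠ 0 := by
    rintro rfl
    simp at hvh
  have ha := hH.mulVec_dotProduct_self_pos hh
  set t := -2 * (H *ᵥ v ⬝ᵥ h) / (H *ᵥ h ⬝ᵥ h)
  have ht : t ≠ 0 := div_ne_zero (mul_ne_zero (by norm_num) hvh) ha.ne'
  have hroot : 2 * (H *ᵥ v ⬝ᵥ h) + t * (H *ᵥ h ⬝ᵥ h) = 0 := by
    simp only [t]
    field_simp
    ring
  have hsphere : H *ᵥ (v + t • h) ⬝ᵥ (v + t • h) = H *ᵥ v ⬝ᵥ v := by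
    rw [hH.posSemidef.isSymm.mulVec_add_smul_dotProduct_add_smul]
    linear_combination t * hroot
  have hdiff := cubicModel_add_sub_cubicModel hJ hH.posSemidef hgrad (t • h)
  rw [hsphere, sub_self, mulVec_smul_dotProduct_smul] at hdiff
  have hle := sub_nonneg.mpr (hmin (v + t • h))
  refine (mul_nonneg_iff_of_pos_left (c := 1 / 2 * t ^ 2) (by positivity)).mp ?_
  linarith

theorem shiftedHessian_nonneg_of_dotProduct_eq_zero (hJ : J.IsSymm) (hH : H.PosSemidef)
    (hL : 0 ≤ L) (hmin : ∀ u, cubicModel g J H L v ≤ cubicModel g J H L u)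
    (hgrad : g + shiftedHessian J H L v *ᵥ v = 0) {h : n → ℝ} (hvh : H *ᵥ v ⬝ᵥ h = 0) :
    0 ≤ shiftedHessian J H L v *ᵥ h ⬝ᵥ h := by
  set r := √(H *ᵥ v ⬝ᵥ v) with hr_def
  set a := H *ᵥ h ⬝ᵥ h
  have hr : 0 ≤ r := Real.sqrt_nonneg _
  have ha : 0 ≤ a := hH.mulVec_dotProduct_self_nonneg h
  have hline (t : ℝ) : H *ᵥ (v + t • h) ⬝ᵥ (v + t • h) = r ^ 2 + t ^ 2 * a := by
    rw [hH.isSymm.mulVec_add_smul_dotProduct_add_smul, hvh,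
      Real.sq_sqrt (hH.mulVec_dotProduct_self_nonneg v)]
    ring
  set q := shiftedHessian J H L v *ᵥ h ⬝ᵥ h with hq_def
  set f : ℝ → ℝ := fun t => 1 / 2 * q + L / 6 * a * (√(r ^ 2 + t ^ 2 * a) - r)
  have hf (t : ℝ) (ht : t ≠ 0) : 0 ≤ f t := by
    have hdiff := cubicModel_add_sub_cubicModel hJ hH hgrad (t • h)
    rw [hline, mulVec_smul_dotProduct_smul, ← hr_def, ← hq_def] at hdiff
    set s := √(r ^ 2 + t ^ 2 * a)
    have hs2 : s ^ 2 = r ^ 2 + t ^ 2 * a := Real.sq_sqrt (by positivity)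
    have hrs : r ≤ s := Real.le_sqrt_of_sq_le (by nlinarith)
    have hle := sub_nonneg.mpr (hmin (v + t • h))
    have hcubic : L / 12 * (s - r) ^ 2 * (2 * s + r) ≤ t ^ 2 * (L / 6 * a * (s - r)) :=
      calc L / 12 * (s - r) ^ 2 * (2 * s + r)
          ≤ L / 12 * (s - r) ^ 2 * (2 * s + r) + L / 12 * (s - r) ^ 2 * r :=
            le_add_of_nonneg_right (by positivity)
        _ = t ^ 2 * (L / 6 * a * (s - r)) := by linear_combination (L / 6 * (s - r)) * hs2
    refine (mul_nonneg_iff_of_pos_left (c := t ^ 2) (by positivity)).mp ?_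
    show 0 ≤ t ^ 2 * (1 / 2 * q + L / 6 * a * (s - r))
    linarith
  have hf0 : f 0 = 1 / 2 * q := by simp [f, Real.sqrt_sq hr]
  have hlim : Tendsto f (𝓝[≠] 0) (𝓝 (f 0)) :=
    (Continuous.tendsto (by fun_prop) 0).mono_left nhdsWithin_le_nhds
  have := ge_of_tendsto hlim (eventually_nhdsWithin_of_forall hf)
  linarith

end CubicModel

theorem cubic_subproblem_psd_general {p : ℕ}
    (H : Matrix (Fin p) (Fin p) ℝ) (hHpd : H.PosDef)
    (J : Matrix (Fin p) (Fin p) ℝ) (hJsymm : J.IsSymm)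
    (g v : Fin p → ℝ) (L : ℝ) (hL : 0 < L)
    (hmin : ∀ u : Fin p → ℝ,
      g ⬝ᵥ v + (1 / 2) * ((J.mulVec v) ⬝ᵥ v) + (L / 6) * (Real.sqrt ((H.mulVec v) ⬝ᵥ v)) ^ 3 ≤
      g ⬝ᵥ u + (1 / 2) * ((J.mulVec u) ⬝ᵥ u) + (L / 6) * (Real.sqrt ((H.mulVec u) ⬝ᵥ u)) ^ 3) :
    (J + (L / 2 * Real.sqrt ((H.mulVec v) ⬝ᵥ v)) • H).PosSemidef := by
  have hgrad := add_shiftedHessian_mulVec_eq_zero hJsymm hHpd.posSemidef hmin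
  refine posSemidef_of_isSymm_of_mulVec_dotProduct_self_nonneg
    (hJsymm.add (hHpd.posSemidef.isSymm.smul _)) fun h => ?_
  by_cases hvh : H *ᵥ v ⬝ᵥ h = 0
  · exact shiftedHessian_nonneg_of_dotProduct_eq_zero hJsymm hHpd.posSemidef hL.le hmin hgrad hvh
  · exact shiftedHessian_nonneg_of_dotProduct_ne_zero hJsymm hHpd hmin hgrad hvh

/-- If v globally minimizes Q(u) = ⟨g,u⟩ + (1/2)⟨Ju,u⟩ + (L/6)‖u‖³_H over ℝᵖ, with
H symmetric positive definite and J symmetric, then J + (L/2)‖v‖_H·H ⪰ 0. -/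
theorem cubic_subproblem_psd {p : ℕ}
    (H : Matrix (Fin p) (Fin p) ℝ) (hHsymm : H.IsSymm) (hHpd : H.PosDef)
    (J : Matrix (Fin p) (Fin p) ℝ) (hJsymm : J.IsSymm)
    (g v : Fin p → ℝ) (L : ℝ) (hL : 0 < L)
    (hmin : ∀ u : Fin p → ℝ,
      g ⬝ᵥ v + (1 / 2) * ((J.mulVec v) ⬝ᵥ v) + (L / 6) * (Real.sqrt ((H.mulVec v) ⬝ᵥ v)) ^ 3 ≤
      g ⬝ᵥ u + (1 / 2) * ((J.mulVec u) ⬝ᵥ u) + (L / 6) * (Real.sqrt ((H.mulVec u) ⬝ᵥ u)) ^ 3) :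
    (J + (L / 2 * Real.sqrt ((H.mulVec v) ⬝ᵥ v)) • H).PosSemidef :=
  cubic_subproblem_psd_general H hHpd J hJsymm g v L hL hmin
end

section
/- Let v ∈ ℝⁿ with Av = 0 be a global minimizer of Q(u) = ⟨g, u⟩ + (1/2)⟨J u, u⟩ + (L/6)‖u‖³_H over {u : Au = 0}, where H is symmetric positive definite, J symmetric. Then for all d with Ad = 0, ⟨(J + (L/2)‖v‖_H · H) d, d⟩ ≥ 0. -/
/-!
Restrict `Q` to the line `t ↦ v + t d`: with `h = ‖v‖²_H`, `σ = ⟨Hv, d⟩ + ⟨Hd, v⟩`, `p = ‖d‖²_H`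
and `j = ⟨Jd, d⟩` one gets `Q (v + t d) - Q v = t γ + t² j / 2 + (L/6) (√(h + tσ + t²p)³ - √h³)`
for some `γ`, and this is `≥ 0` for all `t`.

If `σ ≠ 0` then `h, p > 0`, the first-order condition at `t = 0` reads `γ = -(L/4) √h σ`, and at
`t = -σ/p`, where `‖v + t d‖_H = ‖v‖_H`, the inequality becomes
`0 ≤ (σ/p)² / 2 · (j + (L/2) √h p)`.

If `σ = 0`, adding the inequalities at `t` and `-t` removes the linear term, and
`b³ - c³ ≤ (3/2) b (b² - c²)` for `0 ≤ c ≤ b` gives `0 ≤ j + (L/2) √(h + t²p) p`; let `t → 0`.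
-/

open Matrix

section CubicOnLine

variable {h σ p γ j L : ℝ}

noncomputable def cubicOnLine (h σ p γ j L t : ℝ) : ℝ :=
  t * γ + t ^ 2 / 2 * j + L / 6 * √(h + t * σ + t ^ 2 * p) ^ 3

lemma cubicOnLine_zero : cubicOnLine h σ p γ j L 0 = L / 6 * √h ^ 3 := by
  simp [cubicOnLine]

lemma hasDerivAt_cubicOnLine_zero (hh : 0 < h) :
    HasDerivAt (cubicOnLine h σ p γ j L) (γ + L / 4 * √h * σ) 0 := by
  have hq : HasDerivAt (fun t => h + t * σ + t ^ 2 * p) σ 0 :=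
    ((((hasDerivAt_id (0 : ℝ)).mul_const σ).const_add h).add
      ((hasDerivAt_pow 2 (0 : ℝ)).mul_const p)).congr_deriv (by simp)
  have hcube := ((hq.sqrt (by simpa using hh.ne')).pow 3).const_mul (L / 6)
  have hquad := ((hasDerivAt_id (0 : ℝ)).mul_const γ).add
    ((hasDerivAt_pow 2 (0 : ℝ)).div_const 2 |>.mul_const j)
  refine (hquad.add hcube).congr_deriv ?_
  have : √h ≠ 0 := (Real.sqrt_pos.mpr hh).ne'
  rw [show h + 0 * σ + 0 ^ 2 * p = h by ring]
  field_simp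
  ring

lemma pos_of_forall_quadratic_nonneg (hq : ∀ t, 0 ≤ h + t * σ + t ^ 2 * p) (hσ : σ ≠ 0) :
    0 < h ∧ 0 < p := by
  have hdisc : σ ^ 2 ≤ 4 * p * h := by
    have := discrim_le_zero fun t => (hq t).trans_eq (by ring : _ = p * (t * t) + σ * t + h)
    rw [discrim] at this
    linarith
  have hh : 0 ≤ h := by simpa using hq 0
  have hph : 0 < p * h := by nlinarith [sq_pos_of_ne_zero hσ]
  have hh' : 0 < h := hh.lt_of_ne (by rintro rfl; simp at hph)
  exact ⟨hh', pos_of_mul_pos_left hph hh'.le⟩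

lemma sqrt_pow_three_sub_le {x y : ℝ} (hx : 0 ≤ x) (hxy : x ≤ y) :
    √y ^ 3 - √x ^ 3 ≤ 3 / 2 * √y * (y - x) := by
  have ha := Real.sqrt_nonneg x
  have hab := Real.sqrt_le_sqrt hxy
  rw [show y - x = √y ^ 2 - √x ^ 2 by rw [Real.sq_sqrt hx, Real.sq_sqrt (hx.trans hxy)]]
  nlinarith [sq_nonneg (√y - √x), sq_nonneg (√y + √x)]

lemma curvature_nonneg_of_isMin_cubicOnLine_of_ne_zero (hq : ∀ t, 0 ≤ h + t * σ + t ^ 2 * p)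
    (hσ : σ ≠ 0)
    (hmin : ∀ t, cubicOnLine h σ p γ j L 0 ≤ cubicOnLine h σ p γ j L t) :
    0 ≤ j + L / 2 * √h * p := by
  obtain ⟨hh, hp⟩ := pos_of_forall_quadratic_nonneg hq hσ
  have hfoc : γ + L / 4 * √h * σ = 0 :=
    IsLocalMin.hasDerivAt_eq_zero (Filter.Eventually.of_forall hmin)
      (hasDerivAt_cubicOnLine_zero hh)
  have hsphere := hmin (-σ / p)
  have hnorm : h + -σ / p * σ + (-σ / p) ^ 2 * p = h := by field_simp; ring
  rw [cubicOnLine_zero, cubicOnLine, hnorm] at hsphere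
  have hγ : γ = -(L / 4 * √h * σ) := by linarith
  have : 0 ≤ (σ / p) ^ 2 / 2 * (j + L / 2 * √h * p) := by
    have e : (σ / p) ^ 2 / 2 * (j + L / 2 * √h * p) = -σ / p * γ + (-σ / p) ^ 2 / 2 * j := by
      rw [hγ]; field_simp; ring
    linarith
  exact nonneg_of_mul_nonneg_right this (by positivity)

lemma curvature_nonneg_of_isMin_cubicOnLine_of_eq_zero (hL : 0 ≤ L) (hh : 0 ≤ h) (hp : 0 ≤ p)
    (hmin : ∀ t, cubicOnLine h 0 p γ j L 0 ≤ cubicOnLine h 0 p γ j L t) :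
    0 ≤ j + L / 2 * √h * p := by
  have key : ∀ t ≠ 0, 0 ≤ j + L / 2 * √(h + t ^ 2 * p) * p := by
    intro t ht
    have hpos := hmin t
    have hneg := hmin (-t)
    rw [cubicOnLine_zero] at hpos hneg
    simp only [cubicOnLine, mul_zero, add_zero, neg_sq] at hpos hneg
    have hcube := sqrt_pow_three_sub_le hh (le_add_of_nonneg_right (by positivity : 0 ≤ t ^ 2 * p))
    have : 0 ≤ t ^ 2 * (j + L / 2 * √(h + t ^ 2 * p) * p) := by
      nlinarith [mul_le_mul_of_nonneg_left hcube hL]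
    exact nonneg_of_mul_nonneg_right this (by positivity)
  have hlim : Filter.Tendsto (fun t => j + L / 2 * √(h + t ^ 2 * p) * p) (nhdsWithin 0 {0}ᶜ)
      (nhds (j + L / 2 * √h * p)) := by
    have hc : Continuous fun t : ℝ => j + L / 2 * √(h + t ^ 2 * p) * p := by fun_prop
    simpa using (hc.tendsto 0).mono_left nhdsWithin_le_nhds
  exact ge_of_tendsto hlim (eventually_nhdsWithin_of_forall key)

lemma curvature_nonneg_of_isMin_cubicOnLine (hL : 0 ≤ L) (hp : 0 ≤ p)
    (hq : ∀ t, 0 ≤ h + t * σ + t ^ 2 * p)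
    (hmin : ∀ t, cubicOnLine h σ p γ j L 0 ≤ cubicOnLine h σ p γ j L t) :
    0 ≤ j + L / 2 * √h * p := by
  rcases eq_or_ne σ 0 with rfl | hσ
  · exact curvature_nonneg_of_isMin_cubicOnLine_of_eq_zero hL (by simpa using hq 0) hp hmin
  · exact curvature_nonneg_of_isMin_cubicOnLine_of_ne_zero hq hσ hmin

end CubicOnLine

lemma Matrix.dotProduct_mulVec_add_smul {ι R : Type*} [Fintype ι] [CommRing R]
    (M : Matrix ι ι R) (v d : ι → R) (t : R) :
    M *ᵥ (v + t • d) ⬝ᵥ (v + t • d) =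
      M *ᵥ v ⬝ᵥ v + t * (M *ᵥ v ⬝ᵥ d + M *ᵥ d ⬝ᵥ v) + t ^ 2 * (M *ᵥ d ⬝ᵥ d) := by
  simp only [mulVec_add, mulVec_smul, add_dotProduct, dotProduct_add, smul_dotProduct,
    dotProduct_smul, smul_eq_mul]
  ring

theorem cubic_subproblem_psd_on_kernel_general {n m : ℕ}
    (A : Matrix (Fin m) (Fin n) ℝ)
    (H : Matrix (Fin n) (Fin n) ℝ) (hHpd : H.PosDef)
    (J : Matrix (Fin n) (Fin n) ℝ)
    (g v : Fin n → ℝ) (L : ℝ) (hL : 0 < L)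
    (hv : A.mulVec v = 0)
    (hmin : ∀ u : Fin n → ℝ, A.mulVec u = 0 →
      g ⬝ᵥ v + (1 / 2) * ((J.mulVec v) ⬝ᵥ v) + (L / 6) * (Real.sqrt ((H.mulVec v) ⬝ᵥ v)) ^ 3 ≤
      g ⬝ᵥ u + (1 / 2) * ((J.mulVec u) ⬝ᵥ u) + (L / 6) * (Real.sqrt ((H.mulVec u) ⬝ᵥ u)) ^ 3) :
    ∀ d : Fin n → ℝ, A.mulVec d = 0 →
      0 ≤ ((J + (L / 2 * Real.sqrt ((H.mulVec v) ⬝ᵥ v)) • H).mulVec d) ⬝ᵥ d := by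
  intro d hd
  have hline (t : ℝ) : A *ᵥ (v + t • d) = 0 := by simp [mulVec_add, mulVec_smul, hv, hd]
  have hH (x : Fin n → ℝ) : 0 ≤ H *ᵥ x ⬝ᵥ x := by
    simpa [dotProduct_comm] using hHpd.posSemidef.dotProduct_mulVec_nonneg x
  rw [add_mulVec, smul_mulVec, add_dotProduct, smul_dotProduct, smul_eq_mul]
  refine curvature_nonneg_of_isMin_cubicOnLine (σ := H *ᵥ v ⬝ᵥ d + H *ᵥ d ⬝ᵥ v)
    (γ := g ⬝ᵥ d + (J *ᵥ v ⬝ᵥ d + J *ᵥ d ⬝ᵥ v) / 2) hL.le (hH d) (fun t => ?_) (fun t => ?_)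
  · simpa only [dotProduct_mulVec_add_smul] using hH (v + t • d)
  · have hQ := hmin _ (hline t)
    rw [dotProduct_mulVec_add_smul, dotProduct_mulVec_add_smul, dotProduct_add, dotProduct_smul,
      smul_eq_mul] at hQ
    rw [cubicOnLine_zero, cubicOnLine]
    linarith

/-- If v ∈ ker(A) globally minimizes Q(u) = ⟨g,u⟩ + (1/2)⟨Ju,u⟩ + (L/6)‖u‖³_H over
{u : Au = 0}, then ⟨(J + (L/2)‖v‖_H·H)d, d⟩ ≥ 0 for all d with Ad = 0. -/
theorem cubic_subproblem_psd_on_kernel {n m : ℕ}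
    (A : Matrix (Fin m) (Fin n) ℝ)
    (H : Matrix (Fin n) (Fin n) ℝ) (hHsymm : H.IsSymm) (hHpd : H.PosDef)
    (J : Matrix (Fin n) (Fin n) ℝ) (hJsymm : J.IsSymm)
    (g v : Fin n → ℝ) (L : ℝ) (hL : 0 < L)
    (hv : A.mulVec v = 0)
    (hmin : ∀ u : Fin n → ℝ, A.mulVec u = 0 →
      g ⬝ᵥ v + (1 / 2) * ((J.mulVec v) ⬝ᵥ v) + (L / 6) * (Real.sqrt ((H.mulVec v) ⬝ᵥ v)) ^ 3 ≤
      g ⬝ᵥ u + (1 / 2) * ((J.mulVec u) ⬝ᵥ u) + (L / 6) * (Real.sqrt ((H.mulVec u) ⬝ᵥ u)) ^ 3) :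
    ∀ d : Fin n → ℝ, A.mulVec d = 0 →
      0 ≤ ((J + (L / 2 * Real.sqrt ((H.mulVec v) ⬝ᵥ v)) • H).mulVec d) ⬝ᵥ d :=
  cubic_subproblem_psd_on_kernel_general A H hHpd J g v L hL hv hmin
end

section
/- Let (L_k)_{k≥0} be a positive sequence with L_{k+1} = 2^{i_k − 1} L_k where i_k ≥ 0 are integers, and suppose for every k, 2^{i_k} L_k ≤ 2·max{M, L_k} for some M > 0. Then L_k ≤ max{M, L_0} for all k, and the total count N(K) = Σ_{j=0}^{K}(i_j + 1) satisfies N(K) ≤ 2(K+1) + max{log₂(M/L_0), 0}. -/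
/-!
Since `2^{i_k} L_k ≤ 2 max{M, L_k}`, each step gives `L_{k+1} = 2^{i_k} L_k / 2 ≤ max{M, L_k}`,
so by induction `L_k ≤ max{M, L_0}`. In base-2 logarithms the recursion reads
`log₂ L_{k+1} - log₂ L_k = i_k - 1`, so `Σ_{j ≤ K} (i_j - 1)` telescopes to
`log₂ (L_{K+1} / L_0) ≤ log₂ (max{M, L_0} / L_0) = max{log₂ (M / L_0), 0}`,
and adding `2` per step gives the bound on `N(K)`.
-/

open Finset Real

theorem le_max_zero_of_le_max_succ {α : Type*} [LinearOrder α] {u : ℕ → α} {M : α}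
    (h : ∀ k, u (k + 1) ≤ max M (u k)) (k : ℕ) : u k ≤ max M (u 0) := by
  induction k with
  | zero => exact le_max_right _ _
  | succ n ih => exact (h n).trans (max_le (le_max_left _ _) ih)

theorem logb_two_max_sub_logb_two_le (M : ℝ) {a : ℝ} (ha : 0 < a) :
    logb 2 (max M a) - logb 2 a ≤ max (logb 2 (M / a)) 0 := by
  rcases le_total M a with h | h
  · simp [max_eq_right h]
  · rw [max_eq_left h, ← logb_div (ha.trans_le h).ne' ha.ne']
    exact le_max_left _ _

section Backtracking

variable {L : ℕ → ℝ} {i : ℕ → ℕ}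

theorem pos_of_backtracking (hL0 : 0 < L 0)
    (hrec : ∀ k, L (k + 1) = (2 : ℝ) ^ ((i k : ℤ) - 1) * L k) (k : ℕ) : 0 < L k := by
  induction k with
  | zero => exact hL0
  | succ n ih => rw [hrec n]; positivity

theorem backtracking_succ_le_max {M : ℝ}
    (hrec : ∀ k, L (k + 1) = (2 : ℝ) ^ ((i k : ℤ) - 1) * L k)
    (hstop : ∀ k, (2 : ℝ) ^ (i k) * L k ≤ 2 * max M (L k)) (k : ℕ) :
    L (k + 1) ≤ max M (L k) := by
  have halve : (2 : ℝ) ^ ((i k : ℤ) - 1) * L k = (2 : ℝ) ^ (i k) * L k / 2 := by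
    rw [zpow_sub₀ two_ne_zero, zpow_natCast, zpow_one]; ring
  rw [hrec k, halve]
  linarith [hstop k]

theorem logb_two_backtracking_succ_sub (hL0 : 0 < L 0)
    (hrec : ∀ k, L (k + 1) = (2 : ℝ) ^ ((i k : ℤ) - 1) * L k) (k : ℕ) :
    logb 2 (L (k + 1)) - logb 2 (L k) = (i k : ℝ) - 1 := by
  have hpow : logb 2 ((2 : ℝ) ^ ((i k : ℤ) - 1)) = (i k : ℝ) - 1 := by
    rw [← rpow_intCast, logb_rpow two_pos (by norm_num)]; push_cast; rfl
  rw [hrec k, logb_mul (by positivity) (pos_of_backtracking hL0 hrec k).ne', hpow]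
  ring

theorem sum_range_sub_one_eq_logb_two_sub (hL0 : 0 < L 0)
    (hrec : ∀ k, L (k + 1) = (2 : ℝ) ^ ((i k : ℤ) - 1) * L k) (n : ℕ) :
    ∑ j ∈ range n, ((i j : ℝ) - 1) = logb 2 (L n) - logb 2 (L 0) := by
  simp_rw [← logb_two_backtracking_succ_sub hL0 hrec]
  exact sum_range_sub (fun k => logb 2 (L k)) n

end Backtracking

theorem backtracking_total_count_general (L : ℕ → ℝ) (i : ℕ → ℕ) (M : ℝ)
    (hL0 : 0 < L 0)
    (hrec : ∀ k, L (k + 1) = (2 : ℝ) ^ ((i k : ℤ) - 1) * L k)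
    (hstop : ∀ k, (2 : ℝ) ^ (i k) * L k ≤ 2 * max M (L k)) :
    (∀ k, L k ≤ max M (L 0)) ∧
    (∀ K : ℕ, (∑ j ∈ Finset.range (K + 1), ((i j : ℝ) + 1)) ≤
      2 * (K + 1) + max (Real.logb 2 (M / L 0)) 0) := by
  have hbound := le_max_zero_of_le_max_succ (backtracking_succ_le_max hrec hstop)
  refine ⟨hbound, fun K => ?_⟩
  have hsum : ∑ j ∈ range (K + 1), ((i j : ℝ) + 1) =
      ∑ j ∈ range (K + 1), ((i j : ℝ) - 1) + 2 * (K + 1) := by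
    simp only [sum_add_distrib, sum_sub_distrib, sum_const, card_range, nsmul_eq_mul]
    push_cast
    ring
  have hlog : logb 2 (L (K + 1)) ≤ logb 2 (max M (L 0)) :=
    logb_le_logb_of_le one_lt_two (pos_of_backtracking hL0 hrec _) (hbound _)
  rw [hsum, sum_range_sub_one_eq_logb_two_sub hL0 hrec]
  linarith [logb_two_max_sub_logb_two_le M hL0]

/-- Backtracking line-search bookkeeping: if L_{k+1} = 2^{i_k − 1} L_k with
2^{i_k} L_k ≤ 2·max{M, L_k} for all k, then L_k ≤ max{M, L_0} for all k, and
Σ_{j=0}^{K}(i_j + 1) ≤ 2(K+1) + max{log₂(M/L_0), 0}. -/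
theorem backtracking_total_count (L : ℕ → ℝ) (i : ℕ → ℕ) (M : ℝ)
    (hM : 0 < M) (hL0 : 0 < L 0)
    (hrec : ∀ k, L (k + 1) = (2 : ℝ) ^ ((i k : ℤ) - 1) * L k)
    (hstop : ∀ k, (2 : ℝ) ^ (i k) * L k ≤ 2 * max M (L k)) :
    (∀ k, L k ≤ max M (L 0)) ∧
    (∀ K : ℕ, (∑ j ∈ Finset.range (K + 1), ((i j : ℝ) + 1)) ≤
      2 * (K + 1) + max (Real.logb 2 (M / L 0)) 0) :=
  backtracking_total_count_general L i M hL0 hrec hstop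
end
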